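/- arXiv:2205.04197 — 7 statements merged into one kernel-verified Lean document; each statement's English description precedes it below -/
import Mathlib

section
/- The bounded timed window parity objective is contained in the parity objective: if a timed sequence π satisfies BTW(p), then the smallest priority occurring infinitely often along π is even. -/
open Classical

/-- Minimum priority over the index segment `[a, b]`. -/
noncomputable def segMin {L : Type*} (p : L → ℕ) (ℓ : ℕ → L) (a b : ℕ) : ℕ :=
  sInf {v | ∃ j, a ≤ j ∧ j ≤ b ∧ p (ℓ j) = v}

/-- Timed good window objective: some prefix has even minimal priority and duration `< lam`. -/
def TGW {L : Type*} (p : L → ℕ) (lam : ℕ) (ℓ : ℕ → L) (t : ℕ → ℝ) : Prop :=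
  ∃ n, Even (segMin p ℓ 0 n) ∧ t n - t 0 < lam

/-- Direct fixed timed window objective: every suffix satisfies `TGW`. -/
def DFTW {L : Type*} (p : L → ℕ) (lam : ℕ) (ℓ : ℕ → L) (t : ℕ → ℝ) : Prop :=
  ∀ n, TGW p lam (fun k => ℓ (n + k)) (fun k => t (n + k))

/-- Fixed timed window objective: some suffix satisfies `DFTW`. -/
def FTW {L : Type*} (p : L → ℕ) (lam : ℕ) (ℓ : ℕ → L) (t : ℕ → ℝ) : Prop :=
  ∃ n, DFTW p lam (fun k => ℓ (n + k)) (fun k => t (n + k))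

/-- Direct bounded timed window objective: `DFTW` for some bound. -/
def DBTW {L : Type*} (p : L → ℕ) (ℓ : ℕ → L) (t : ℕ → ℝ) : Prop :=
  ∃ lam : ℕ, DFTW p lam ℓ t

/-- Bounded timed window objective: some suffix satisfies `DBTW`. -/
def BTW {L : Type*} (p : L → ℕ) (ℓ : ℕ → L) (t : ℕ → ℝ) : Prop :=
  ∃ n, DBTW p (fun k => ℓ (n + k)) (fun k => t (n + k))

theorem btw_subset_parity {L : Type*} [Fintype L] (p : L → ℕ)
    (ℓ : ℕ → L) (t : ℕ → ℝ) (hmono : Monotone t)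
    (h : BTW p ℓ t) :
    Even (sInf {d : ℕ | ∀ N : ℕ, ∃ n ≥ N, p (ℓ n) = d}) := by
  classical
  set S := {d : ℕ | ∀ N : ℕ, ∃ n ≥ N, p (ℓ n) = d} with hS
  have hne : S.Nonempty := by
    obtain ⟨y, hy⟩ := Finite.exists_infinite_fiber ℓ
    refine ⟨p y, fun N => ?_⟩
    have hinf : (ℓ ⁻¹' {y}).Infinite := Set.infinite_coe_iff.mp hy
    obtain ⟨n, hn, hN⟩ := hinf.exists_gt N
    exact ⟨n, le_of_lt hN, by simpa using congrArg p hn⟩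
  set d := sInf S with hd
  have hdS : d ∈ S := Nat.sInf_mem hne
  have hM : ∃ M, ∀ n, M ≤ n → d ≤ p (ℓ n) := by
    by_cases hT : {n | p (ℓ n) < d}.Finite
    · obtain ⟨M, hMb⟩ := hT.bddAbove
      refine ⟨M + 1, fun n hn => le_of_not_gt fun hlt => ?_⟩
      have := hMb hlt
      omega
    · exfalso
      have hTinf : {n | p (ℓ n) < d}.Infinite := hT
      haveI : Infinite ↥{n | p (ℓ n) < d} := hTinf.to_subtype
      obtain ⟨y, hy⟩ := Finite.exists_infinite_fiber (fun n : ↥{n | p (ℓ n) < d} => ℓ n)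
      have hAinf : (Subtype.val '' ((fun n : ↥{n | p (ℓ n) < d} => ℓ n) ⁻¹' {y})).Infinite :=
        (Set.infinite_coe_iff.mp hy).image (Set.injOn_of_injective Subtype.val_injective)
      have hyd : p y < d := by
        obtain ⟨a, ha⟩ := hAinf.nonempty
        obtain ⟨b, hb, rfl⟩ := ha
        have : ℓ b = y := hb
        rw [← this]; exact b.2
      have hyS : p y ∈ S := by
        intro N
        obtain ⟨n, hn, hN⟩ := hAinf.exists_gt N
        obtain ⟨b, hb, rfl⟩ := hn
        have : ℓ b = y := hb
        exact ⟨b, le_of_lt hN, by rw [this]⟩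
      have := Nat.sInf_le hyS
      omega
  obtain ⟨M, hM⟩ := hM
  obtain ⟨m, lam, hD⟩ := h
  obtain ⟨n, hn, hpn⟩ := hdS (max M m)
  obtain ⟨k, rfl⟩ : ∃ k, n = m + k := ⟨n - m, by omega⟩
  obtain ⟨n', hEven, -⟩ := hD k
  have hseg : segMin p (fun j => ℓ (m + (k + j))) 0 n' = d := by
    apply le_antisymm
    · exact Nat.sInf_le ⟨0, le_refl 0, Nat.zero_le _, by
        simpa using hpn⟩
    · refine le_csInf ⟨d, 0, le_refl 0, Nat.zero_le _, by simpa using hpn⟩ ?_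
      rintro v ⟨j, -, hj2, rfl⟩
      exact hM _ (by omega)
  rw [hseg] at hEven
  exact hEven
end

section
/- There exists a timed sequence satisfying the parity objective but violating BTW(p): with three locations of priorities 1, 2, 0, the sequence that at stage n spends n time units on the location of priority 2 between a visit to the priority-1 location and a visit to the priority-0 location is time-divergent, has smallest infinitely occurring priority 0 (even), but no suffix of it satisfies DFTW(p, λ) for any λ ∈ ℕ. -/
open Classical

/-- Priorities of the three locations `a, b, c` of the example TA. -/
def examplePriority : Fin 3 → ℕ := ![1, 2, 0]

/-- The location visited at step `k`: the sequence cycles `a b c a b c …`. -/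
def exampleLoc (k : ℕ) : Fin 3 := ⟨k % 3, Nat.mod_lt _ (by norm_num)⟩

/-- Total time elapsed before stage `n`: `T n = Σ_{k<n} k = n (n-1) / 2`. -/
def exampleStageTime (n : ℕ) : ℕ := n * (n - 1) / 2

/-- The timestamp of step `k`: at stage `n = k/3 + 1`, locations `a` and `b` are
visited at time `T n` and location `c` at time `T n + n`, so `n` time units are
spent in the priority-2 location `b` at stage `n`. -/
def exampleTime (k : ℕ) : ℝ :=
  ((exampleStageTime (k / 3 + 1) + (if k % 3 = 2 then k / 3 + 1 else 0) : ℕ) : ℝ)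

/-! Auxiliary lemmas -/

def eT (k : ℕ) : ℕ := exampleStageTime (k / 3 + 1) + (if k % 3 = 2 then k / 3 + 1 else 0)

lemma exampleTime_eq (k : ℕ) : exampleTime k = (eT k : ℝ) := rfl

lemma stage_succ (n : ℕ) : exampleStageTime (n + 1) = exampleStageTime n + n := by
  unfold exampleStageTime
  rw [← Finset.sum_range_id, ← Finset.sum_range_id, Finset.sum_range_succ]

lemma eT_mono : Monotone eT := by
  apply monotone_nat_of_le_succ
  intro k
  unfold eT
  have h : k % 3 = 0 ∨ k % 3 = 1 ∨ k % 3 = 2 := by omega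
  rcases h with h | h | h
  · have h1 : (k + 1) / 3 = k / 3 ∧ (k + 1) % 3 = 1 := by omega
    simp [h, h1.1, h1.2]
  · have h1 : (k + 1) / 3 = k / 3 ∧ (k + 1) % 3 = 2 := by omega
    simp [h, h1.1, h1.2]
  · have h1 : (k + 1) / 3 = k / 3 + 1 ∧ (k + 1) % 3 = 0 := by omega
    simp [h, h1.1, h1.2, stage_succ (k / 3 + 1)]

lemma eT_3n (N : ℕ) : eT (3 * N) = exampleStageTime (N + 1) := by
  have h1 : (3 * N) / 3 = N ∧ (3 * N) % 3 = 0 := by omega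
  simp [eT, h1.1, h1.2]

lemma eT_3n2 (N : ℕ) : eT (3 * N + 2) = exampleStageTime (N + 1) + (N + 1) := by
  have h1 : (3 * N + 2) / 3 = N ∧ (3 * N + 2) % 3 = 2 := by omega
  simp [eT, h1.1, h1.2]

lemma prio_eq (m : ℕ) :
    examplePriority (exampleLoc m) = if m % 3 = 2 then 0 else if m % 3 = 1 then 2 else 1 := by
  have h : m % 3 = 0 ∨ m % 3 = 1 ∨ m % 3 = 2 := by omega
  rcases h with h | h | h <;> simp [exampleLoc, examplePriority, h]

theorem parity_not_btw_example :
    Monotone exampleTime ∧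
    (∀ B : ℝ, ∃ n, B < exampleTime n) ∧
    sInf {d : ℕ | ∀ N : ℕ, ∃ n ≥ N, examplePriority (exampleLoc n) = d} = 0 ∧
    ¬ BTW examplePriority exampleLoc exampleTime := by
  have hmono : Monotone exampleTime := by
    intro i j hij
    rw [exampleTime_eq, exampleTime_eq]
    exact_mod_cast eT_mono hij
  refine ⟨hmono, ?_, ?_, ?_⟩
  · -- time divergence
    intro B
    set n := ⌊B⌋₊ + 1 with hn
    refine ⟨3 * n, ?_⟩
    have h1 : B < (n : ℝ) := by exact_mod_cast Nat.lt_floor_add_one B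
    have h2 : n ≤ eT (3 * n) := by
      rw [eT_3n]
      unfold exampleStageTime
      have h3 : n + 1 - 1 = n := rfl
      rw [h3, Nat.le_div_iff_mul_le (by norm_num)]
      nlinarith [Nat.one_le_iff_ne_zero.mpr (by omega : n ≠ 0)]
    rw [exampleTime_eq]
    calc B < (n : ℝ) := h1
      _ ≤ (eT (3 * n) : ℝ) := by exact_mod_cast h2
  · -- parity: 0 occurs infinitely often
    apply Nat.sInf_eq_zero.mpr
    left
    intro N
    refine ⟨3 * N + 2, by omega, ?_⟩
    rw [prio_eq]
    simp [show (3 * N + 2) % 3 = 2 by omega]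
  · -- not BTW
    rintro ⟨n, lam, hD⟩
    set N := n + lam with hN
    have hm : n + (3 * N - n) = 3 * N := by omega
    obtain ⟨j, hEven, hTime⟩ := hD (3 * N - n)
    have harith : ∀ k, n + (3 * N - n + k) = 3 * N + k := by intro k; omega
    simp only [harith] at hEven hTime
    simp only [Nat.add_zero] at hTime
    -- the window set
    set S : Set ℕ := {v | ∃ i, 0 ≤ i ∧ i ≤ j ∧ examplePriority (exampleLoc (3 * N + i)) = v}
      with hS
    have hSdef : segMin examplePriority (fun k => exampleLoc (3 * N + k)) 0 j = sInf S := rfl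
    have h1S : 1 ∈ S := by
      refine ⟨0, le_rfl, Nat.zero_le _, ?_⟩
      rw [prio_eq]
      simp [show (3 * N + 0) % 3 = 0 by omega]
    have hle1 : sInf S ≤ 1 := Nat.sInf_le h1S
    have hzero : sInf S = 0 := by
      rw [hSdef] at hEven
      obtain ⟨r, hr⟩ := hEven
      omega
    have h0S : (0 : ℕ) ∈ S := by
      rcases Nat.sInf_eq_zero.mp hzero with h | h
      · exact h
      · exact absurd h1S (by simp [h])
    obtain ⟨i, -, hij, hp0⟩ := h0S
    have hi2 : i % 3 = 2 := by
      rw [prio_eq] at hp0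
      by_contra hc
      have h3 : (3 * N + i) % 3 = i % 3 := by omega
      rcases (by omega : i % 3 = 0 ∨ i % 3 = 1) with h | h <;> simp [h3, h] at hp0
    have hji : 2 ≤ j := by omega
    -- time bound
    have htmono : eT (3 * N + 2) ≤ eT (3 * N + j) := eT_mono (by omega)
    rw [exampleTime_eq, exampleTime_eq] at hTime
    have hval2 : eT (3 * N + 2) = eT (3 * N) + (N + 1) := by
      rw [eT_3n2, eT_3n]
    have : (lam : ℝ) ≤ (eT (3 * N + j) : ℝ) - (eT (3 * N) : ℝ) := by
      have : eT (3 * N) + lam ≤ eT (3 * N + j) := by omega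
      have hcast : ((eT (3 * N) + lam : ℕ) : ℝ) ≤ ((eT (3 * N + j) : ℕ) : ℝ) := by
        exact_mod_cast this
      push_cast at hcast
      linarith
    linarith
end

section
/- Elimination pigeonhole lemma: let π = (s₀,t₀)(s₁,t₁)… be a timed sequence over a finite set A of size N, with t₀ = 0, (tₙ) nondecreasing and unbounded, and with steps tₙ₊₁ − tₙ ≤ 1. Suppose that for every element a ∈ A and every pair of indices i < j with sᵢ = sⱼ = a, we have tⱼ − tᵢ ≤ 1 or ⌊tᵢ⌋ = ⌊tⱼ⌋ (i.e., every repetition of a within which the time passes a new integer is excluded, except when it occurs within 1 time unit). Then no index n satisfies tₙ ≥ 2N + 1. Consequently, in any such sequence with tₙ reaching 2N + 2, there exist i < j with sᵢ = sⱼ, ⌊tᵢ⌋ < ⌊tⱼ⌋, and tⱼ < 2N + 3. -/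
open Classical

theorem elimination_pigeonhole (A : Type*) [Fintype A] (N : ℕ)
    (hcard : Fintype.card A = N) (hN : 1 ≤ N)
    (s : ℕ → A) (t : ℕ → ℝ)
    (h0 : t 0 = 0) (hmono : Monotone t)
    (hstep : ∀ n, t (n + 1) - t n ≤ 1)
    (hdiv : ∀ B : ℝ, ∃ n, B < t n) :
    ((∀ (a : A) (i j : ℕ), i < j → s i = a → s j = a →
        t j - t i ≤ 1 ∨ ⌊t i⌋ = ⌊t j⌋) →
      ∀ n, t n < 2 * (N : ℝ) + 1) ∧
    (∃ i j : ℕ, i < j ∧ s i = s j ∧ ⌊t i⌋ < ⌊t j⌋ ∧ t j < 2 * (N : ℝ) + 3) := by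
  have hex : ∀ k : ℕ, ∃ n, (2 * k : ℝ) ≤ t n := fun k =>
    (hdiv (2 * k)).imp fun n h => h.le
  set idx : ℕ → ℕ := fun k => Nat.find (hex k) with hidx
  have hlb : ∀ k : ℕ, (2 * k : ℝ) ≤ t (idx k) := fun k => Nat.find_spec (hex k)
  have hub : ∀ k, t (idx k) < 2 * k + 1 := by
    intro k
    cases h : idx k with
    | zero =>
      rw [h0]
      positivity
    | succ m =>
      have hmlt : m < idx k := by rw [h]; exact m.lt_succ_self
      have hm : ¬ (2 * (k : ℝ) ≤ t m) := Nat.find_min (hex k) hmlt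
      have := hstep m
      push_neg at hm
      linarith
  -- key: two indices with the required properties and gap > 1
  have key : ∃ i j : ℕ, i < j ∧ s i = s j ∧ ⌊t i⌋ < ⌊t j⌋ ∧
      1 < t j - t i ∧ t j < 2 * (N : ℝ) + 3 := by
    have hcard' : Fintype.card A < Fintype.card (Fin (N + 1)) := by
      simp [hcard]
    obtain ⟨k, l, hne, heq⟩ :=
      Fintype.exists_ne_map_eq_of_card_lt (fun k : Fin (N + 1) => s (idx k)) hcard'
    -- wlog k < l
    rcases lt_or_gt_of_ne (fun h => hne (by exact_mod_cast Fin.ext h) : (k : ℕ) ≠ l) with hkl | hkl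
    · refine ⟨idx k, idx l, ?_, heq, ?_, ?_, ?_⟩
      all_goals
        have h1 := hlb k; have h2 := hub k; have h3 := hlb l; have h4 := hub l
        have hk1 : (2 * (k : ℝ) + 2) ≤ 2 * (l : ℝ) := by
          have : (k : ℝ) + 1 ≤ l := by exact_mod_cast hkl
          linarith
        have hlt : t (idx k) < t (idx l) := by linarith
      · by_contra h
        push_neg at h
        exact absurd (hmono h) (not_le.mpr hlt)
      · have hfk : (⌊t (idx k)⌋ : ℝ) ≤ t (idx k) := Int.floor_le _
        have hfl : ((2 * l : ℕ) : ℤ) ≤ ⌊t (idx l)⌋ := by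
          rw [Int.le_floor]; push_cast; linarith
        have : (⌊t (idx k)⌋ : ℝ) < ((2 * l : ℕ) : ℤ) := by push_cast; linarith
        exact lt_of_lt_of_le (by exact_mod_cast this) hfl
      · linarith
      · have hlN : (l : ℝ) ≤ N := by
          have := l.isLt; exact_mod_cast Nat.lt_succ_iff.mp this
        linarith
    · refine ⟨idx l, idx k, ?_, heq.symm, ?_, ?_, ?_⟩
      all_goals
        have h1 := hlb l; have h2 := hub l; have h3 := hlb k; have h4 := hub k
        have hk1 : (2 * (l : ℝ) + 2) ≤ 2 * (k : ℝ) := by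
          have : (l : ℝ) + 1 ≤ k := by exact_mod_cast hkl
          linarith
        have hlt : t (idx l) < t (idx k) := by linarith
      · by_contra h
        push_neg at h
        exact absurd (hmono h) (not_le.mpr hlt)
      · have hfk : (⌊t (idx l)⌋ : ℝ) ≤ t (idx l) := Int.floor_le _
        have hfl : ((2 * k : ℕ) : ℤ) ≤ ⌊t (idx k)⌋ := by
          rw [Int.le_floor]; push_cast; linarith
        have : (⌊t (idx l)⌋ : ℝ) < ((2 * k : ℕ) : ℤ) := by push_cast; linarith
        exact lt_of_lt_of_le (by exact_mod_cast this) hfl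
      · linarith
      · have hlN : (k : ℝ) ≤ N := by
          have := k.isLt; exact_mod_cast Nat.lt_succ_iff.mp this
        linarith
  obtain ⟨i, j, hij, hs, hfl, hgap, hbd⟩ := key
  constructor
  · intro H n
    rcases H (s i) i j hij rfl hs.symm with h | h
    · linarith
    · exact absurd h (ne_of_lt hfl)
  · exact ⟨i, j, hij, hs, hfl, hbd⟩
end

section
/- Descent lemma for priorities (request-response implies good windows): let w = ℓ₀ℓ₁… be an infinite word over a finite set L with priorities p : L → ℕ, and suppose that for every index n such that p(ℓₙ) is odd, there exists n′ > n with p(ℓ_{n′}) even and p(ℓ_{n′}) < p(ℓₙ). Then for every index m there exists n ≥ m such that min_{m≤j≤n} p(ℓⱼ) is even. -/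
open Classical

lemma segMin_mem {L : Type*} (p : L → ℕ) (ℓ : ℕ → L) {a b : ℕ} (hab : a ≤ b) :
    ∃ j, a ≤ j ∧ j ≤ b ∧ p (ℓ j) = segMin p ℓ a b :=
  Nat.sInf_mem (⟨p (ℓ a), a, le_refl a, hab, rfl⟩ : {v | ∃ j, a ≤ j ∧ j ≤ b ∧ p (ℓ j) = v}.Nonempty)

lemma segMin_le {L : Type*} (p : L → ℕ) (ℓ : ℕ → L) {a b j : ℕ} (h1 : a ≤ j) (h2 : j ≤ b) :
    segMin p ℓ a b ≤ p (ℓ j) :=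
  Nat.sInf_le ⟨j, h1, h2, rfl⟩

theorem descent_good_window {L : Type*} [Fintype L] (p : L → ℕ) (ℓ : ℕ → L)
    (h : ∀ n, Odd (p (ℓ n)) → ∃ n' > n, Even (p (ℓ n')) ∧ p (ℓ n') < p (ℓ n)) :
    ∀ m, ∃ n ≥ m, Even (segMin p ℓ m n) := by
  intro m
  suffices H : ∀ v n, m ≤ n → segMin p ℓ m n ≤ v → ∃ n' ≥ m, Even (segMin p ℓ m n') by
    exact H (segMin p ℓ m m) m le_rfl le_rfl
  intro v
  induction v with
  | zero =>
    intro n hn hle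
    exact ⟨n, hn, by simp [Nat.le_zero.mp hle]⟩
  | succ v ih =>
    intro n hn hle
    by_cases he : Even (segMin p ℓ m n)
    · exact ⟨n, hn, he⟩
    · have hodd : Odd (segMin p ℓ m n) := Nat.not_even_iff_odd.mp he
      obtain ⟨j, hmj, hjn, hj⟩ := segMin_mem p ℓ hn
      have : Odd (p (ℓ j)) := hj ▸ hodd
      obtain ⟨n', hn'j, _, hlt⟩ := h j this
      set N := max n n'
      have hmN : m ≤ N := le_trans hn (le_max_left _ _)
      have h1 : segMin p ℓ m N ≤ p (ℓ n') :=
        segMin_le p ℓ (le_trans hmj (le_of_lt hn'j)) (le_max_right _ _)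
      have h2 : segMin p ℓ m N < segMin p ℓ m n := by
        calc segMin p ℓ m N ≤ p (ℓ n') := h1
          _ < p (ℓ j) := hlt
          _ = segMin p ℓ m n := hj
      have : segMin p ℓ m N ≤ v := by omega
      exact ih N hmN this
end

section
/- Direct bounded window implies request-response: if a timed sequence π = (ℓ₀,t₀)(ℓ₁,t₁)… satisfies DBTW(p), then for every n with p(ℓₙ) odd there exists n′ > n with p(ℓ_{n′}) even and p(ℓ_{n′}) < p(ℓₙ). -/
open Classical

theorem dbtw_implies_request_response {L : Type*} [Fintype L] (p : L → ℕ)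
    (ℓ : ℕ → L) (t : ℕ → ℝ) (hmono : Monotone t)
    (h : DBTW p ℓ t) :
    ∀ n, Odd (p (ℓ n)) → ∃ n' > n, Even (p (ℓ n')) ∧ p (ℓ n') < p (ℓ n) := by
  obtain ⟨lam, hd⟩ := h
  intro n hodd
  obtain ⟨m, hev, _⟩ := hd n
  set S := {v | ∃ j, 0 ≤ j ∧ j ≤ m ∧ p (ℓ (n + j)) = v} with hS
  have hne : S.Nonempty := ⟨p (ℓ (n + 0)), 0, le_refl _, Nat.zero_le _, rfl⟩
  have hmem : sInf S ∈ S := Nat.sInf_mem hne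
  obtain ⟨j, _, hjm, hjv⟩ := hmem
  have hle : sInf S ≤ p (ℓ n) := Nat.sInf_le ⟨0, le_refl _, Nat.zero_le _, by simp⟩
  have hevS : Even (sInf S) := hev
  have hlt : sInf S < p (ℓ n) := lt_of_le_of_ne hle (by
    intro heq; rw [heq] at hevS; exact (Nat.not_even_iff_odd.mpr hodd) hevS)
  have hj0 : 0 < j := by
    rcases Nat.eq_zero_or_pos j with h0 | h0
    · exfalso; rw [h0] at hjv; simp at hjv; rw [hjv] at hlt; exact lt_irrefl _ hlt
    · exact h0
  exact ⟨n + j, by omega, by rw [hjv]; exact hevS, by rw [hjv]; exact hlt⟩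
end

section
/- Deterministic Büchi automaton for a chain-response family: let S be a set of states and (Rq₁, Rp₁), …, (Rq_r, Rp_r) pairs of subsets of S with Rp₁ ⊇ Rp₂ ⊇ … ⊇ Rp_r and Rqᵢ ∩ Rpⱼ = ∅ for all i, j. Define the deterministic automaton H with state set Q = {0, 1, …, r}, initial state 0, and transition up(q, s) = 0 if q ≠ 0 and s ∈ Rp_q, and up(q, s) = max({q} ∪ {i ≤ r : s ∈ Rqᵢ}) otherwise. Then an infinite word s₀s₁… ∈ S^ω satisfies the request-response objective RR((Rqᵢ, Rpᵢ)ᵢ) if and only if the run of H on s₀s₁… visits state 0 infinitely often. -/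
open Classical in
/-- Transition function of the deterministic automaton tracking the maximal
pending request index of a chain-response family with pairs indexed by
`1, …, r` (state `0` means no pending request). -/
noncomputable def chainUp {S : Type*} (Rq Rp : ℕ → Set S) (r : ℕ)
    (q : ℕ) (s : S) : ℕ :=
  if q ≠ 0 ∧ s ∈ Rp q then 0
  else sSup ({q} ∪ {i : ℕ | 1 ≤ i ∧ i ≤ r ∧ s ∈ Rq i})

/-- The run of the automaton on the word `σ`, starting in state `0`. -/
noncomputable def chainRun {S : Type*} (Rq Rp : ℕ → Set S) (r : ℕ)
    (σ : ℕ → S) : ℕ → ℕ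
  | 0 => 0
  | n + 1 => chainUp Rq Rp r (chainRun Rq Rp r σ n) (σ n)

section Aux

variable {S : Type*} (Rq Rp : ℕ → Set S) (r : ℕ) (σ : ℕ → S)

lemma chainT_bdd (q : ℕ) (s : S) :
    BddAbove ({q} ∪ {i : ℕ | 1 ≤ i ∧ i ≤ r ∧ s ∈ Rq i}) := by
  refine ⟨max q r, ?_⟩
  rintro x hx
  rcases hx with hx | hx
  · simp only [Set.mem_singleton_iff] at hx
    omega
  · rcases hx with ⟨_, h2, _⟩
    omega

lemma chainT_ne (q : ℕ) (s : S) :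
    ({q} ∪ {i : ℕ | 1 ≤ i ∧ i ≤ r ∧ s ∈ Rq i}).Nonempty :=
  ⟨q, Or.inl rfl⟩

lemma chainRun_le : ∀ n, chainRun Rq Rp r σ n ≤ r := by
  intro n
  induction n with
  | zero => simp [chainRun]
  | succ n ih =>
    show chainUp Rq Rp r (chainRun Rq Rp r σ n) (σ n) ≤ r
    unfold chainUp
    split
    · exact Nat.zero_le r
    · refine csSup_le (chainT_ne Rq r _ _) ?_
      rintro x (hx | hx)
      · simp only [Set.mem_singleton_iff] at hx; omega
      · exact hx.2.1

lemma chainRun_mono_step (n : ℕ) (h : chainRun Rq Rp r σ (n + 1) ≠ 0) :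
    chainRun Rq Rp r σ n ≤ chainRun Rq Rp r σ (n + 1) := by
  have h' : chainUp Rq Rp r (chainRun Rq Rp r σ n) (σ n) ≠ 0 := h
  show chainRun Rq Rp r σ n ≤ chainUp Rq Rp r (chainRun Rq Rp r σ n) (σ n)
  unfold chainUp at h' ⊢
  by_cases hcond : chainRun Rq Rp r σ n ≠ 0 ∧ σ n ∈ Rp (chainRun Rq Rp r σ n)
  · rw [if_pos hcond] at h'; omega
  · rw [if_neg hcond]
    exact le_csSup (chainT_bdd Rq r _ _) (Or.inl rfl)

lemma chainRun_ge_of_req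
    (hdisj : ∀ i j, 1 ≤ i → i ≤ r → 1 ≤ j → j ≤ r → Rq i ∩ Rp j = ∅)
    {i n : ℕ} (h1 : 1 ≤ i) (h2 : i ≤ r) (hreq : σ n ∈ Rq i) :
    i ≤ chainRun Rq Rp r σ (n + 1) := by
  show i ≤ chainUp Rq Rp r (chainRun Rq Rp r σ n) (σ n)
  unfold chainUp
  split
  · next hcond =>
    exfalso
    have hq1 : 1 ≤ chainRun Rq Rp r σ n := Nat.one_le_iff_ne_zero.mpr hcond.1
    have hqr : chainRun Rq Rp r σ n ≤ r := chainRun_le Rq Rp r σ n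
    have := hdisj i (chainRun Rq Rp r σ n) h1 h2 hq1 hqr
    exact absurd (Set.mem_inter hreq hcond.2) (by rw [this]; exact Set.notMem_empty _)
  · exact le_csSup (chainT_bdd Rq r _ _) (Or.inr ⟨h1, h2, hreq⟩)

lemma chainRun_pending :
    ∀ n, chainRun Rq Rp r σ n ≠ 0 →
      ∃ m < n, σ m ∈ Rq (chainRun Rq Rp r σ n) ∧
        ∀ k, m < k → k ≤ n → chainRun Rq Rp r σ k ≠ 0 := by
  intro n
  induction n with
  | zero => intro h; exact absurd rfl h
  | succ n ih =>
    intro h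
    have hval : chainRun Rq Rp r σ (n + 1)
        = chainUp Rq Rp r (chainRun Rq Rp r σ n) (σ n) := rfl
    rw [hval] at h ⊢
    unfold chainUp at h ⊢
    split at h
    · exact absurd rfl h
    · next hcond =>
      rw [if_neg hcond] at *
      have hmem := Nat.sSup_mem (chainT_ne Rq r (chainRun Rq Rp r σ n) (σ n))
        (chainT_bdd Rq r (chainRun Rq Rp r σ n) (σ n))
      rcases hmem with hmem | hmem
      · -- sSup equals the previous state
        simp only [Set.mem_singleton_iff] at hmem
        rw [hmem] at h ⊢
        rcases ih h with ⟨m, hm, hreq, hnz⟩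
        refine ⟨m, by omega, hreq, ?_⟩
        intro k hk1 hk2
        rcases Nat.lt_succ_iff_lt_or_eq.mp (Nat.lt_succ_of_le hk2) with hk | hk
        · exact hnz k hk1 (by omega)
        · subst hk
          show chainUp Rq Rp r (chainRun Rq Rp r σ n) (σ n) ≠ 0
          unfold chainUp
          rw [if_neg hcond, hmem]
          exact h
      · -- sSup comes from a fresh request
        refine ⟨n, Nat.lt_succ_self n, hmem.2.2, ?_⟩
        intro k hk1 hk2
        have : k = n + 1 := by omega
        subst this
        show chainUp Rq Rp r (chainRun Rq Rp r σ n) (σ n) ≠ 0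
        unfold chainUp
        rw [if_neg hcond]
        exact h

end Aux

theorem chain_response_buchi {S : Type*} (r : ℕ) (Rq Rp : ℕ → Set S)
    (hchain : ∀ i j, 1 ≤ i → i ≤ j → j ≤ r → Rp j ⊆ Rp i)
    (hdisj : ∀ i j, 1 ≤ i → i ≤ r → 1 ≤ j → j ≤ r → Rq i ∩ Rp j = ∅)
    (σ : ℕ → S) :
    (∀ i, 1 ≤ i → i ≤ r →
        ∀ n : ℕ, σ n ∈ Rq i → ∃ n' ≥ n, σ n' ∈ Rp i) ↔
    (∀ N : ℕ, ∃ n ≥ N, chainRun Rq Rp r σ n = 0) := by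
  constructor
  · -- responses ⇒ infinitely many visits to 0
    intro hresp N
    by_contra hno
    push_neg at hno
    -- run is nonzero and nondecreasing from N on
    have hmono : ∀ k l, N ≤ k → k ≤ l →
        chainRun Rq Rp r σ k ≤ chainRun Rq Rp r σ l := by
      intro k l hk hkl
      have key : ∀ d, chainRun Rq Rp r σ k ≤ chainRun Rq Rp r σ (k + d) := by
        intro d
        induction d with
        | zero => exact le_refl _
        | succ d ihd =>
          refine le_trans ihd ?_
          exact chainRun_mono_step Rq Rp r σ (k + d) (hno (k + d + 1) (by omega))
      have := key (l - k)
      rwa [show k + (l - k) = l by omega] at this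
    -- eventual value: the sup of the range of n ↦ run (N + n)
    have hbdd : BddAbove (Set.range fun n => chainRun Rq Rp r σ (N + n)) := by
      refine ⟨r, ?_⟩
      rintro x ⟨n, rfl⟩
      exact chainRun_le Rq Rp r σ (N + n)
    obtain ⟨M, hM⟩ := Nat.sSup_mem
      (Set.range_nonempty (fun n => chainRun Rq Rp r σ (N + n))) hbdd
    have hM' : chainRun Rq Rp r σ (N + M)
        = sSup (Set.range fun n => chainRun Rq Rp r σ (N + n)) := hM
    have hconst : ∀ k, N + M ≤ k →
        chainRun Rq Rp r σ k = chainRun Rq Rp r σ (N + M) := by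
      intro k hk
      have h1 := hmono (N + M) k (by omega) hk
      have h2 : chainRun Rq Rp r σ k
          ≤ sSup (Set.range fun n => chainRun Rq Rp r σ (N + n)) := by
        have hkeq : chainRun Rq Rp r σ k = chainRun Rq Rp r σ (N + (k - N)) := by
          congr 1; omega
        rw [hkeq]
        exact le_csSup hbdd ⟨k - N, rfl⟩
      rw [← hM'] at h2
      omega
    set q := chainRun Rq Rp r σ (N + M) with hq
    have hqne : q ≠ 0 := hno (N + M) (by omega)
    have hq1 : 1 ≤ q := Nat.one_le_iff_ne_zero.mpr hqne
    have hqr : q ≤ r := chainRun_le Rq Rp r σ (N + M)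
    obtain ⟨m, hm, hreq, hnz⟩ := chainRun_pending Rq Rp r σ (N + M) hqne
    rw [← hq] at hreq
    -- run k = q for all k ≥ m + 1
    have hrq : ∀ k, m + 1 ≤ k → chainRun Rq Rp r σ k = q := by
      intro k hk
      rcases le_or_gt (N + M) k with h | h
      · exact hconst k h
      · -- m + 1 ≤ k < N + M : nondecreasing between, sandwiched
        have hge : q ≤ chainRun Rq Rp r σ k := by
          have h0 : q ≤ chainRun Rq Rp r σ (m + 1) :=
            chainRun_ge_of_req Rq Rp r σ hdisj hq1 hqr hreq
          have key : ∀ d, m + 1 + d ≤ N + M → q ≤ chainRun Rq Rp r σ (m + 1 + d) := by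
            intro d
            induction d with
            | zero => intro _; exact h0
            | succ d ihd =>
              intro hd
              refine le_trans (ihd (by omega)) ?_
              exact chainRun_mono_step Rq Rp r σ (m + 1 + d)
                (hnz (m + 1 + d + 1) (by omega) (by omega))
          have := key (k - (m + 1)) (by omega)
          rwa [show m + 1 + (k - (m + 1)) = k by omega] at this
        have hle : chainRun Rq Rp r σ k ≤ q := by
          have key : ∀ d, k + d ≤ N + M →
              chainRun Rq Rp r σ k ≤ chainRun Rq Rp r σ (k + d) := by
            intro d
            induction d with
            | zero => intro _; exact le_refl _
            | succ d ihd =>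
              intro hd
              refine le_trans (ihd (by omega)) ?_
              exact chainRun_mono_step Rq Rp r σ (k + d)
                (hnz (k + d + 1) (by omega) (by omega))
          have := key (N + M - k) (by omega)
          rwa [show k + (N + M - k) = N + M by omega] at this
        omega
    -- the pending request q at time m is never answered: contradiction
    obtain ⟨n', hn', hresp'⟩ := hresp q hq1 hqr m hreq
    rcases eq_or_lt_of_le hn' with h | h
    · -- n' = m : request and response coincide, contradicting disjointness
      subst h
      have := hdisj q q hq1 hqr hq1 hqr
      exact absurd (Set.mem_inter hreq hresp') (by rw [this]; exact Set.notMem_empty _)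
    · -- n' > m : the automaton resets at n' + 1, contradicting run (n'+1) = q ≠ 0
      have h1 : chainRun Rq Rp r σ n' = q := hrq n' (by omega)
      have h2 : chainRun Rq Rp r σ (n' + 1) = q := hrq (n' + 1) (by omega)
      have h3 : chainRun Rq Rp r σ (n' + 1) = 0 := by
        show chainUp Rq Rp r (chainRun Rq Rp r σ n') (σ n') = 0
        unfold chainUp
        rw [if_pos ⟨by rw [h1]; exact hqne, by rw [h1]; exact hresp'⟩]
      omega
  · -- infinitely many visits to 0 ⇒ responses
    intro hzero i hi1 hi2 n hreq
    have hge : i ≤ chainRun Rq Rp r σ (n + 1) :=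
      chainRun_ge_of_req Rq Rp r σ hdisj hi1 hi2 hreq
    obtain ⟨n', hn', hz⟩ := hzero (n + 1)
    have hP : ∃ k, n + 1 ≤ k ∧ chainRun Rq Rp r σ k = 0 := ⟨n', hn', hz⟩
    classical
    have hk1 : n + 1 ≤ Nat.find hP := (Nat.find_spec hP).1
    have hk2 : chainRun Rq Rp r σ (Nat.find hP) = 0 := (Nat.find_spec hP).2
    obtain ⟨k, hkdef⟩ : ∃ k, Nat.find hP = k := ⟨_, rfl⟩
    rw [hkdef] at hk1 hk2
    have hkmin : ∀ j, n + 1 ≤ j → j < k → chainRun Rq Rp r σ j ≠ 0 := by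
      intro j hj1 hj2 hj0
      exact Nat.find_min hP (hkdef ▸ hj2) ⟨hj1, hj0⟩
    have hkgt : n + 1 < k := by
      rcases Nat.lt_or_ge (n + 1) k with h | h
      · exact h
      · exfalso
        have hkeq : k = n + 1 := by omega
        rw [hkeq] at hk2
        omega
    -- run stays ≥ i on [n+1, k-1]
    have hstay : ∀ d, n + 1 + d ≤ k - 1 → i ≤ chainRun Rq Rp r σ (n + 1 + d) := by
      intro d
      induction d with
      | zero => intro _; exact hge
      | succ d ihd =>
        intro hd
        refine le_trans (ihd (by omega)) ?_
        exact chainRun_mono_step Rq Rp r σ (n + 1 + d)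
          (hkmin (n + 1 + d + 1) (by omega) (by omega))
    have hmi : i ≤ chainRun Rq Rp r σ (k - 1) := by
      have := hstay (k - 1 - (n + 1)) (by omega)
      rwa [show n + 1 + (k - 1 - (n + 1)) = k - 1 by omega] at this
    have hmr : chainRun Rq Rp r σ (k - 1) ≤ r := chainRun_le Rq Rp r σ (k - 1)
    have hstep : chainRun Rq Rp r σ (k - 1 + 1) = 0 := by
      rw [show k - 1 + 1 = k by omega]; exact hk2
    have hresp : σ (k - 1) ∈ Rp (chainRun Rq Rp r σ (k - 1)) := by
      by_contra hnotin
      have hcond : ¬ (chainRun Rq Rp r σ (k - 1) ≠ 0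
          ∧ σ (k - 1) ∈ Rp (chainRun Rq Rp r σ (k - 1))) := fun h => hnotin h.2
      have hle : chainRun Rq Rp r σ (k - 1) ≤ chainRun Rq Rp r σ (k - 1 + 1) := by
        show chainRun Rq Rp r σ (k - 1)
          ≤ chainUp Rq Rp r (chainRun Rq Rp r σ (k - 1)) (σ (k - 1))
        unfold chainUp
        rw [if_neg hcond]
        exact le_csSup (chainT_bdd Rq r _ _) (Or.inl rfl)
      omega
    exact ⟨k - 1, by omega, hchain i (chainRun Rq Rp r σ (k - 1)) hi1 hmi hmr hresp⟩
end

section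
/- If a timed sequence π = (ℓ₀,t₀)(ℓ₁,t₁)… is eventually periodic in locations — i.e., there exist n₀ and period m ≥ 1 with ℓ_{n+m} = ℓₙ for all n ≥ n₀ — is time-divergent, and the minimum priority min_{n₀≤j≤n} p(ℓⱼ) is odd for all n ≥ n₀, then π violates BTW(p). -/
open Classical

theorem eventually_periodic_odd_min_not_btw {L : Type*} [Fintype L] (p : L → ℕ)
    (ℓ : ℕ → L) (t : ℕ → ℝ) (hmono : Monotone t)
    (hdiv : ∀ B : ℝ, ∃ n, B < t n)
    (n₀ m : ℕ) (hm : 1 ≤ m)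
    (hper : ∀ n, n₀ ≤ n → ℓ (n + m) = ℓ n)
    (hodd : ∀ n, n₀ ≤ n → Odd (segMin p ℓ n₀ n)) :
    ¬ BTW p ℓ t := by
  intro ⟨n, lam, hdf⟩
  -- eventual tail minimum
  set S : Set ℕ := {v | ∃ j, n₀ ≤ j ∧ p (ℓ j) = v} with hS
  have hSne : S.Nonempty := ⟨p (ℓ n₀), n₀, le_rfl, rfl⟩
  set v := sInf S with hv
  obtain ⟨j₁, hj₁, hpj₁⟩ : v ∈ S := Nat.sInf_mem hSne
  have hge : ∀ j, n₀ ≤ j → v ≤ p (ℓ j) := fun j hj => Nat.sInf_le ⟨j, hj, rfl⟩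
  -- v is odd
  have hvodd : Odd v := by
    have h1 : segMin p ℓ n₀ j₁ ≤ v := by
      rw [← hpj₁]; exact Nat.sInf_le ⟨j₁, hj₁, le_rfl, rfl⟩
    have h2 : v ≤ segMin p ℓ n₀ j₁ := by
      obtain ⟨j, hja, hjb, hje⟩ := Nat.sInf_mem (⟨p (ℓ j₁), j₁, hj₁, le_rfl, rfl⟩ :
        Set.Nonempty {w | ∃ j, n₀ ≤ j ∧ j ≤ j₁ ∧ p (ℓ j) = w})
      rw [show segMin p ℓ n₀ j₁ = p (ℓ j) from hje.symm]
      exact hge j hja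
    have := hodd j₁ hj₁
    rwa [le_antisymm h1 h2] at this
  -- periodic occurrences of v
  have hper' : ∀ k, ℓ (j₁ + k * m) = ℓ j₁ := by
    intro k
    induction k with
    | zero => simp
    | succ k ih =>
      have : j₁ + (k + 1) * m = (j₁ + k * m) + m := by ring
      rw [this, hper _ (le_trans hj₁ (Nat.le_add_right _ _)), ih]
  -- pick an occurrence a ≥ n
  set a := j₁ + n * m with ha
  have han : n ≤ a := le_trans (Nat.le_mul_of_pos_left n hm) (by rw [Nat.mul_comm]; exact Nat.le_add_left _ _)
  have han₀ : n₀ ≤ a := le_trans hj₁ (Nat.le_add_right _ _)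
  have hla : ℓ a = ℓ j₁ := hper' n
  obtain ⟨j, hjeven, -⟩ := hdf (a - n)
  have hna : n + (a - n) = a := Nat.add_sub_cancel' han
  -- the segment min of the suffix at a equals v
  have hseg : segMin p (fun k => ℓ (n + (a - n + k))) 0 j = v := by
    have h1 : segMin p (fun k => ℓ (n + (a - n + k))) 0 j ≤ v := by
      apply Nat.sInf_le
      refine ⟨0, le_rfl, Nat.zero_le _, ?_⟩
      simp only [Nat.add_zero, ← Nat.add_assoc, hna, hla, hpj₁]
    have h2 : v ≤ segMin p (fun k => ℓ (n + (a - n + k))) 0 j := by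
      obtain ⟨i, -, -, hie⟩ := Nat.sInf_mem (⟨p (ℓ (n + (a - n + 0))), 0, le_rfl,
        Nat.zero_le _, rfl⟩ :
        Set.Nonempty {w | ∃ i, 0 ≤ i ∧ i ≤ j ∧ p ((fun k => ℓ (n + (a - n + k))) i) = w})
      simp only [segMin]; rw [← hie]
      exact hge _ (le_trans han₀ (by omega))
    exact le_antisymm h1 h2
  rw [hseg] at hjeven
  exact (Nat.not_odd_iff_even.mpr hjeven) hvodd
end
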